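/- arXiv:alg-geom/9408008 — 15 statements merged into one kernel-verified Lean document; each statement's English description precedes it below -/
import Mathlib

section
/- Let R be a commutative ring and M a nonzero Noetherian R-module. If the zero submodule is indecomposable in M (i.e. whenever (0) = F₁ ∩ F₂ for submodules F₁, F₂ of M, then F₁ = (0) or F₂ = (0)), then M is coprimary, i.e. every zero divisor for M is nilpotent for M. -/
section Defs

variable (A L : Type*) [CommRing A] [AddCommGroup L] [Module A L]

/-- `a ∈ A` is a zero divisor for the module `L`:
`a • y = 0` for some `y ≠ 0` in `L`. -/
def IsZeroDivisorFor (a : A) : Prop := ∃ y : L, y ≠ 0 ∧ a • y = 0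

/-- `a ∈ A` is nilpotent for the module `L`: for every `y ∈ L` there is `n`
with `a ^ n • y = 0`. -/
def IsNilpotentFor (a : A) : Prop := ∀ y : L, ∃ n : ℕ, a ^ n • y = 0

/-- `L` is `q`-coprimary: `L ≠ 0`, every zero divisor for `L` lies in `q`,
and every element of `q` is nilpotent for `L`. -/
def IsCoprimaryFor (q : Ideal A) : Prop :=
  (∃ y : L, y ≠ 0) ∧ (∀ a : A, IsZeroDivisorFor A L a → a ∈ q) ∧
    ∀ a ∈ q, IsNilpotentFor A L a

/-- A submodule `N` of `L` is `q`-primary in `L` iff `L ⧸ N` is `q`-coprimary. -/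
def IsPrimaryIn (N : Submodule A L) (q : Ideal A) : Prop :=
  IsCoprimaryFor A (L ⧸ N) q

/-- The `S`-component of `N` in `L`: `{x ∈ L | ∃ s ∈ S, s • x ∈ N}`,
for an arbitrary subset `S ⊆ A`. -/
def sComp (S : Set A) (N : Submodule A L) : Set L := {x : L | ∃ s ∈ S, s • x ∈ N}

/-- A prime ideal `p` is Krull-associated to `L` iff for every multiplicatively
closed subset `T ⊋ A ∖ p` one has `T^L((0)) ⊋ (A ∖ p)^L((0))`. -/
def KrullAssociated (p : Ideal A) : Prop :=
  ∀ T : Submonoid A, ((p : Set A)ᶜ ⊂ (T : Set A)) →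
    sComp A L ((p : Set A)ᶜ) ⊥ ⊂ sComp A L (T : Set A) ⊥

end Defs

/-- If `M` is a nonzero Noetherian `R`-module and `(0)` is
indecomposable in `M`, then `M` is coprimary: every zero divisor for `M`
is nilpotent for `M`. -/
theorem statement0 {R M : Type*} [CommRing R] [AddCommGroup M] [Module R M]
    [Nontrivial M] [IsNoetherian R M]
    (hind : ∀ F₁ F₂ : Submodule R M, (⊥ : Submodule R M) = F₁ ⊓ F₂ → F₁ = ⊥ ∨ F₂ = ⊥) :
    ∀ r : R, IsZeroDivisorFor R M r → IsNilpotentFor R M r := by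
  intro r hr
  set f : Module.End R M := r • 1 with hf
  have hfn : ∀ (n : ℕ) (x : M), (f ^ n) x = r ^ n • x := by
    intro n x
    rw [hf, smul_pow, one_pow]
    rfl
  -- the chain of kernels
  have hmono : Monotone fun n => LinearMap.ker (f ^ n) := by
    intro a b hab x hx
    simp only [LinearMap.mem_ker, hfn] at hx ⊢
    obtain ⟨c, rfl⟩ := Nat.exists_eq_add_of_le hab
    rw [pow_add, mul_comm, mul_smul, hx, smul_zero]
  obtain ⟨n, hn⟩ := monotone_stabilizes_iff_noetherian.mpr ‹_›
    ⟨fun n => LinearMap.ker (f ^ n), hmono⟩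
  have hint : (⊥ : Submodule R M) = LinearMap.ker (f ^ n) ⊓ LinearMap.range (f ^ n) := by
    apply le_antisymm bot_le
    rintro x ⟨hxk, y, rfl⟩
    have hk : y ∈ LinearMap.ker (f ^ (n + n)) := by
      have h2 : (f ^ n) ((f ^ n) y) = 0 := hxk
      rw [← Module.End.mul_apply, ← pow_add] at h2
      exact h2
    have heq := hn (n + n) (Nat.le_add_right n n)
    simp only [OrderHom.coe_mk] at heq
    rw [← heq] at hk
    have hy : (f ^ n) y = 0 := hk
    simp [Submodule.mem_bot, hy]
  rcases hind _ _ hint with h | h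
  · -- kernel trivial: contradiction with r being a zero divisor
    obtain ⟨y, hy0, hry⟩ := hr
    exfalso
    apply hy0
    have h1 : y ∈ LinearMap.ker (f ^ (n + 1)) := by
      have hfy : f y = 0 := by simpa [hf] using hry
      have : (f ^ (n + 1)) y = (f ^ n) (f y) := by rw [pow_succ]; rfl
      simp [LinearMap.mem_ker, this, hfy]
    have heq := hn (n + 1) (Nat.le_succ n)
    simp only [OrderHom.coe_mk] at heq
    rw [← heq, h, Submodule.mem_bot] at h1
    exact h1
  · -- range trivial: r^n kills everything
    intro y
    refine ⟨n, ?_⟩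
    have : (f ^ n) y ∈ LinearMap.range (f ^ n) := ⟨y, rfl⟩
    rw [h, Submodule.mem_bot] at this
    rw [← hfn]; exact this
end

section
/- Let R be a commutative ring, M an R-module, S a multiplicatively closed subset of R (a submonoid of R containing 1), and let ψ : M → M_S be the canonical map to the localization of M at S. If U is a 𝔓-primary R_S-submodule of M_S (𝔓 a prime ideal of R_S), then the preimage ψ⁻¹(U) is a 𝔭-primary R-submodule of M where 𝔭 = 𝔓 ∩ R (the preimage of 𝔓 in R), 𝔭 ∩ S = ∅, and the R_S-submodule of M_S generated by ψ(ψ⁻¹(U)) equals U. -/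
/-!
Pulling back along `ψ` and taking the `R_S`-span form a Galois insertion
(`Submodule.localized'gi`), so the span of `ψ(ψ⁻¹ U)` is `U`, and `ψ⁻¹ U ≠ M`
because `U ≠ M_S`. Zero divisors and nilpotent elements for `M ⧸ ψ⁻¹ U` map to the
same kind of elements for `M_S ⧸ U` because `r • ψ x = (r / 1) • ψ x`, and
`𝔭 ∩ S = ∅` since `𝔓` contains no unit.
-/

section Primary

variable {A L : Type*} [CommRing A] [AddCommGroup L] [Module A L]

theorem isZeroDivisorFor_quotient_iff {N : Submodule A L} {a : A} :
    IsZeroDivisorFor A (L ⧸ N) a ↔ ∃ x ∉ N, a • x ∈ N := by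
  simp only [IsZeroDivisorFor, (Submodule.Quotient.mk_surjective N).exists, ne_eq,
    ← Submodule.Quotient.mk_smul, Submodule.Quotient.mk_eq_zero]

theorem isNilpotentFor_quotient_iff {N : Submodule A L} {a : A} :
    IsNilpotentFor A (L ⧸ N) a ↔ ∀ x : L, ∃ n : ℕ, a ^ n • x ∈ N := by
  simp only [IsNilpotentFor, (Submodule.Quotient.mk_surjective N).forall,
    ← Submodule.Quotient.mk_smul, Submodule.Quotient.mk_eq_zero]

theorem isPrimaryIn_iff {N : Submodule A L} {q : Ideal A} :
    IsPrimaryIn A L N q ↔ N ≠ ⊤ ∧ (∀ a : A, ∀ x ∉ N, a • x ∈ N → a ∈ q) ∧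
      ∀ a ∈ q, ∀ x : L, ∃ n : ℕ, a ^ n • x ∈ N := by
  simp only [IsPrimaryIn, IsCoprimaryFor, ← nontrivial_iff_exists_ne,
    Submodule.Quotient.nontrivial_iff, isZeroDivisorFor_quotient_iff,
    isNilpotentFor_quotient_iff, forall_exists_index, and_imp]

theorem IsPrimaryIn.comap {B L' : Type*} [CommRing B] [Algebra A B] [AddCommGroup L']
    [Module A L'] [Module B L'] [IsScalarTower A B L'] (f : L →ₗ[A] L')
    {U : Submodule B L'} {q : Ideal B} (hU : IsPrimaryIn B L' U q)
    (hne : (U.restrictScalars A).comap f ≠ ⊤) :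
    IsPrimaryIn A L ((U.restrictScalars A).comap f) (q.comap (algebraMap A B)) := by
  obtain ⟨-, hzero, hnil⟩ := isPrimaryIn_iff.1 hU
  refine isPrimaryIn_iff.2
    ⟨hne, fun a x hx hax => hzero _ (f x) (by exact hx) ?_, fun a ha x => ?_⟩
  · simpa [algebraMap_smul] using hax
  · obtain ⟨n, hn⟩ := hnil _ ha (f x)
    exact ⟨n, by simpa [← map_pow, algebraMap_smul] using hn⟩

end Primary

section Localization

variable {R Rₛ M Mₛ : Type*} [CommSemiring R] [CommSemiring Rₛ] [Algebra R Rₛ]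
  [AddCommMonoid M] [Module R M] [AddCommMonoid Mₛ] [Module R Mₛ] [Module Rₛ Mₛ]
  [IsScalarTower R Rₛ Mₛ]

theorem Submodule.span_image_comap_restrictScalars (S : Submonoid R) [IsLocalization S Rₛ]
    (f : M →ₗ[R] Mₛ) [IsLocalizedModule S f] (U : Submodule Rₛ Mₛ) :
    span Rₛ (f '' (U.restrictScalars R).comap f) = U := by
  rw [← localized'_eq_span Rₛ S]
  exact (localized'gi Rₛ S f).l_u_eq U

theorem Submodule.comap_restrictScalars_ne_top (S : Submonoid R) [IsLocalization S Rₛ]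
    (f : M →ₗ[R] Mₛ) [IsLocalizedModule S f] {U : Submodule Rₛ Mₛ} (hU : U ≠ ⊤) :
    (U.restrictScalars R).comap f ≠ ⊤ := by
  intro h
  apply hU
  rw [← (localized'gi Rₛ S f).l_u_eq U]
  exact (congrArg (localized' Rₛ S f) h).trans (localized'_top Rₛ S f)

end Localization

/-- If `U` is a `𝔓`-primary `R_S`-submodule of `M_S`, then
`ψ⁻¹(U)` is `𝔭 = 𝔓 ∩ R`-primary in `M`, `𝔭 ∩ S = ∅`, and the `R_S`-submodule
of `M_S` generated by `ψ(ψ⁻¹(U))` is `U`. -/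
theorem statement1 {R M : Type*} [CommRing R] [AddCommGroup M] [Module R M]
    (S : Submonoid R) (𝔓 : Ideal (Localization S)) [𝔓.IsPrime]
    (U : Submodule (Localization S) (LocalizedModule S M))
    (hU : IsPrimaryIn (Localization S) (LocalizedModule S M) U 𝔓) :
    IsPrimaryIn R M ((U.restrictScalars R).comap (LocalizedModule.mkLinearMap S M))
        (𝔓.comap (algebraMap R (Localization S))) ∧
      ((𝔓.comap (algebraMap R (Localization S)) : Set R) ∩ (S : Set R) = ∅) ∧
      Submodule.span (Localization S)
        ((LocalizedModule.mkLinearMap S M) ''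
          (((U.restrictScalars R).comap (LocalizedModule.mkLinearMap S M) : Submodule R M) : Set M))
        = U := by
  have hne := Submodule.comap_restrictScalars_ne_top S (LocalizedModule.mkLinearMap S M)
    (isPrimaryIn_iff.1 hU).1
  refine ⟨hU.comap _ hne, ?_, Submodule.span_image_comap_restrictScalars S _ U⟩
  rw [Set.inter_comm, ← Set.disjoint_iff_inter_eq_empty]
  exact (IsLocalization.disjoint_under_iff S (Localization S) 𝔓).2 Ideal.IsPrime.ne_top'
end

section
/- Let R be a commutative ring, M an R-module, S a multiplicatively closed subset of R, and ψ : M → M_S the canonical map to the localization. If N is a 𝔭-primary submodule of M with 𝔭 ∩ S = ∅, then the R_S-submodule N_S of M_S generated by ψ(N) is (R_S·𝔭)-primary in M_S (where R_S·𝔭 is the extension of 𝔭 to R_S), and ψ⁻¹(N_S) = N. -/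
section Coprimary

variable {A L : Type*} [CommRing A] [AddCommGroup L] [Module A L]

lemma isSMulRegular_of_not_isZeroDivisorFor {a : A} (h : ¬IsZeroDivisorFor A L a) :
    IsSMulRegular L a :=
  isSMulRegular_iff_right_eq_zero_of_smul.mpr fun y hy => by_contra fun hy0 => h ⟨y, hy0, hy⟩

lemma IsCoprimaryFor.isSMulRegular_of_disjoint {q : Ideal A} (h : IsCoprimaryFor A L q)
    {S : Submonoid A} (hS : Disjoint (S : Set A) q) (s : S) : IsSMulRegular L (s : A) :=
  isSMulRegular_of_not_isZeroDivisorFor fun hzd => Set.disjoint_left.mp hS s.2 (h.2.1 _ hzd)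

end Coprimary

section Localization

variable {A Aₛ L L' : Type*} [CommRing A] [CommRing Aₛ] [Algebra A Aₛ]
  (S : Submonoid A) [IsLocalization S Aₛ]
  [AddCommGroup L] [Module A L] [AddCommGroup L'] [Module A L'] [Module Aₛ L']
  [IsScalarTower A Aₛ L']

lemma IsZeroDivisorFor.of_mk' (g : L →ₗ[A] L') [IsLocalizedModule S g]
    (hreg : ∀ s : S, IsSMulRegular L (s : A)) {r : A} {s : S}
    (h : IsZeroDivisorFor Aₛ L' (IsLocalization.mk' Aₛ r s)) : IsZeroDivisorFor A L r := by
  obtain ⟨z, hz, hrz⟩ := h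
  obtain ⟨⟨y, t⟩, rfl⟩ := IsLocalizedModule.mk'_surjective S g z
  rw [Function.uncurry_apply_pair] at hz hrz
  rw [IsLocalizedModule.mk'_smul_mk', IsLocalizedModule.mk'_eq_zero'] at hrz
  obtain ⟨c, hc⟩ := hrz
  exact ⟨y, fun hy => hz (by rw [hy, IsLocalizedModule.mk'_zero]),
    (hreg c).right_eq_zero_of_smul hc⟩

lemma IsNilpotentFor.mk' (g : L →ₗ[A] L') [IsLocalizedModule S g] {r : A}
    (h : IsNilpotentFor A L r) (s : S) : IsNilpotentFor Aₛ L' (IsLocalization.mk' Aₛ r s) := by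
  intro z
  obtain ⟨⟨y, t⟩, rfl⟩ := IsLocalizedModule.mk'_surjective S g z
  obtain ⟨n, hn⟩ := h y
  refine ⟨n, ?_⟩
  rw [Function.uncurry_apply_pair, ← IsLocalization.mk'_pow, IsLocalizedModule.mk'_smul_mk', hn,
    IsLocalizedModule.mk'_zero]

theorem IsCoprimaryFor.of_isLocalizedModule (g : L →ₗ[A] L') [IsLocalizedModule S g]
    {q : Ideal A} (h : IsCoprimaryFor A L q) (hS : Disjoint (S : Set A) q) :
    IsCoprimaryFor Aₛ L' (q.map (algebraMap A Aₛ)) := by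
  have hreg := h.isSMulRegular_of_disjoint hS
  have hinj : Function.Injective g := (IsLocalizedModule.injective_iff_isRegular S g).mpr hreg
  obtain ⟨⟨y, hy⟩, hzd, hnil⟩ := h
  refine ⟨⟨g y, fun hgy => hy (hinj (hgy.trans g.map_zero.symm))⟩, fun a ha => ?_, fun a ha => ?_⟩
  · obtain ⟨⟨r, s⟩, rfl⟩ := IsLocalization.mk'_surjective S a
    have hr : r ∈ q := hzd r (ha.of_mk' S g hreg)
    exact (IsLocalization.mk'_mem_map_algebraMap_iff S Aₛ q r s).mpr
      ⟨1, S.one_mem, by rwa [one_mul]⟩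
  · obtain ⟨⟨⟨p, hp⟩, s⟩, hps⟩ := (IsLocalization.mem_map_algebraMap_iff S Aₛ).mp ha
    rw [← IsLocalization.eq_mk'_iff_mul_eq] at hps
    exact hps ▸ (hnil p hp).mk' S g s

theorem Submodule.comap_localized'_eq (g : L →ₗ[A] L') [IsLocalizedModule S g]
    (N : Submodule A L) (hreg : ∀ s : S, IsSMulRegular (L ⧸ N) (s : A)) :
    ((N.localized' Aₛ S g).restrictScalars A).comap g = N := by
  have hinj : Function.Injective (N.toLocalizedQuotient' Aₛ S g) :=
    (IsLocalizedModule.injective_iff_isRegular S _).mpr hreg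
  ext x
  rw [Submodule.mem_comap, Submodule.restrictScalars_mem, ← Submodule.Quotient.mk_eq_zero,
    ← Submodule.toLocalizedQuotient'_mk, ← map_zero (N.toLocalizedQuotient' Aₛ S g), hinj.eq_iff,
    Submodule.Quotient.mk_eq_zero]

end Localization

theorem statement2_general {R M : Type*} [CommRing R] [AddCommGroup M] [Module R M]
    (S : Submonoid R) (𝔭 : Ideal R)
    (N : Submodule R M) (hN : IsPrimaryIn R M N 𝔭)
    (hdisj : (𝔭 : Set R) ∩ (S : Set R) = ∅) :
    IsPrimaryIn (Localization S) (LocalizedModule S M)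
        (Submodule.span (Localization S)
          ((LocalizedModule.mkLinearMap S M) '' (N : Set M)))
        (𝔭.map (algebraMap R (Localization S))) ∧
      ((Submodule.span (Localization S)
          ((LocalizedModule.mkLinearMap S M) '' (N : Set M))).restrictScalars R).comap
        (LocalizedModule.mkLinearMap S M) = N := by
  have hS : Disjoint (S : Set R) 𝔭 := Set.disjoint_iff_inter_eq_empty.mpr (by rwa [Set.inter_comm])
  have hspan : Submodule.span (Localization S) ((LocalizedModule.mkLinearMap S M) '' (N : Set M)) =
      N.localized S := by
    rw [← Submodule.localized'_span (Localization S) S, Submodule.span_eq]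
  rw [hspan]
  exact ⟨hN.of_isLocalizedModule S (N.toLocalizedQuotient S) hS,
    N.comap_localized'_eq S _ (hN.isSMulRegular_of_disjoint hS)⟩

/-- If `N` is `𝔭`-primary in `M` with `𝔭 ∩ S = ∅`, then the
`R_S`-submodule `N_S` of `M_S` generated by `ψ(N)` is `(R_S·𝔭)`-primary in
`M_S`, and `ψ⁻¹(N_S) = N`. -/
theorem statement2 {R M : Type*} [CommRing R] [AddCommGroup M] [Module R M]
    (S : Submonoid R) (𝔭 : Ideal R) [𝔭.IsPrime]
    (N : Submodule R M) (hN : IsPrimaryIn R M N 𝔭)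
    (hdisj : (𝔭 : Set R) ∩ (S : Set R) = ∅) :
    IsPrimaryIn (Localization S) (LocalizedModule S M)
        (Submodule.span (Localization S)
          ((LocalizedModule.mkLinearMap S M) '' (N : Set M)))
        (𝔭.map (algebraMap R (Localization S))) ∧
      ((Submodule.span (Localization S)
          ((LocalizedModule.mkLinearMap S M) '' (N : Set M))).restrictScalars R).comap
        (LocalizedModule.mkLinearMap S M) = N :=
  statement2_general S 𝔭 N hN hdisj
end

section
/- Let R be a commutative ring, M an R-module, S a multiplicatively closed subset of R, and N = ⋂_{i ∈ I} N_i a finite primary decomposition of a submodule N of M, where N_i is 𝔭_i-primary in M. Let I' = {i ∈ I : 𝔭_i ∩ S = ∅}. Then the S-component satisfies S^M(N) = ⋂_{i ∈ I'} N_i. -/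
/-- If `N = ⋂ᵢ Nᵢ` is a finite primary decomposition with `Nᵢ`
being `𝔭ᵢ`-primary, and `I' = {i | 𝔭ᵢ ∩ S = ∅}`, then
`S^M(N)` is the intersection of the `Nᵢ` with `i ∈ I'`. -/
theorem statement4 {R M ι : Type*} [CommRing R] [AddCommGroup M] [Module R M]
    [Finite ι] (S : Submonoid R) (N : Submodule R M)
    (Ni : ι → Submodule R M) (p : ι → Ideal R)
    (hp : ∀ i, (p i).IsPrime) (hNi : ∀ i, IsPrimaryIn R M (Ni i) (p i))
    (hdec : N = ⨅ i, Ni i) :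
    sComp R M (S : Set R) N =
      ⋂ i ∈ {i : ι | (p i : Set R) ∩ (S : Set R) = ∅}, (Ni i : Set M) := by
  have := Fintype.ofFinite ι
  ext x
  simp only [Set.mem_iInter, SetLike.mem_coe, Set.mem_setOf_eq, sComp]
  constructor
  · rintro ⟨s, hs, hsx⟩ i hi
    by_contra hx
    have hz : IsZeroDivisorFor R (M ⧸ Ni i) s := by
      refine ⟨Submodule.Quotient.mk x, ?_, ?_⟩
      · simpa [Submodule.Quotient.mk_eq_zero] using hx
      · rw [← Submodule.Quotient.mk_smul, Submodule.Quotient.mk_eq_zero]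
        exact (Submodule.mem_iInf _).mp (hdec ▸ hsx) i
    have hmem : s ∈ p i := (hNi i).2.1 s hz
    exact Set.eq_empty_iff_forall_notMem.mp hi s ⟨hmem, hs⟩
  · intro hx
    have key : ∀ i, ∃ s ∈ S, s • x ∈ Ni i := by
      intro i
      by_cases hi : (p i : Set R) ∩ S = ∅
      · exact ⟨1, one_mem S, by simpa using hx i hi⟩
      · obtain ⟨s, hsp, hsS⟩ := Set.nonempty_iff_ne_empty.mpr hi
        obtain ⟨n, hn⟩ := (hNi i).2.2 s hsp (Submodule.Quotient.mk x)
        refine ⟨s ^ n, pow_mem hsS n, ?_⟩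
        rwa [← Submodule.Quotient.mk_smul, Submodule.Quotient.mk_eq_zero] at hn
    choose f hfS hf using key
    refine ⟨∏ i, f i, prod_mem (fun i _ => hfS i), ?_⟩
    classical
    rw [hdec, Submodule.mem_iInf]
    intro i
    rw [← Finset.prod_erase_mul _ _ (Finset.mem_univ i), mul_smul]
    exact Submodule.smul_mem _ _ (hf i)
end

section
/- Let R be a commutative ring, M an R-module, and N = ⋂_{i=1}^r N_i a normal (reduced) primary decomposition of a proper submodule N of M with N_i 𝔭_i-primary in M. Let 𝔭 be one of the primes 𝔭₁,…,𝔭_r and S = R ∖ 𝔭. Then for every multiplicatively closed subset T of R with T ⊋ S, the T-component strictly contains the S-component: T^M(N) ⊋ S^M(N). -/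
/-- if `𝔭` is one of the primes of a normal primary decomposition
of `N` in `M` and `S = R ∖ 𝔭`, then for every multiplicatively closed
`T ⊋ S` one has `T^M(N) ⊋ S^M(N)`. -/
theorem statement6 {R M ι : Type*} [CommRing R] [AddCommGroup M] [Module R M]
    [Finite ι] (N : Submodule R M) (hN : N ≠ ⊤)
    (Ni : ι → Submodule R M) (p : ι → Ideal R)
    (hp : ∀ i, (p i).IsPrime) (hNi : ∀ i, IsPrimaryIn R M (Ni i) (p i))
    (hdec : N = ⨅ i, Ni i)
    (hdist : ∀ i i', i ≠ i' → p i ≠ p i')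
    (hirr : ∀ i, ¬ (⨅ i' ∈ ({i}ᶜ : Set ι), Ni i') ≤ Ni i)
    (i₀ : ι) (T : Submonoid R) (hT : ((p i₀ : Set R))ᶜ ⊂ (T : Set R)) :
    sComp R M ((p i₀ : Set R))ᶜ N ⊂ sComp R M (T : Set R) N := by
  obtain ⟨x, hx_inf, hx_not⟩ := SetLike.not_le_iff_exists.mp (hirr i₀)
  have hx_mem : ∀ i, i ≠ i₀ → x ∈ Ni i := by
    simp only [Submodule.mem_iInf, Set.mem_compl_iff, Set.mem_singleton_iff] at hx_inf
    exact hx_inf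
  obtain ⟨t, htT, htp⟩ := Set.exists_of_ssubset hT
  have htp : t ∈ p i₀ := not_not.mp htp
  obtain ⟨hne, hzd, hnil⟩ := hNi i₀
  obtain ⟨n, hn⟩ := hnil t htp (Submodule.Quotient.mk x)
  rw [← Submodule.Quotient.mk_smul, Submodule.Quotient.mk_eq_zero] at hn
  constructor
  · rintro y ⟨s, hs, hsy⟩
    exact ⟨s, hT.subset hs, hsy⟩
  · intro hsub
    have hxT : x ∈ sComp R M (T : Set R) N := by
      refine ⟨t ^ n, pow_mem htT n, ?_⟩
      rw [hdec, Submodule.mem_iInf]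
      intro i
      by_cases hi : i = i₀
      · exact hi ▸ hn
      · exact Submodule.smul_mem _ _ (hx_mem i hi)
    obtain ⟨s, hs, hsx⟩ := hsub hxT
    rw [hdec, Submodule.mem_iInf] at hsx
    have hsx0 : s • x ∈ Ni i₀ := hsx i₀
    have : s ∈ p i₀ := by
      apply hzd
      refine ⟨Submodule.Quotient.mk x, ?_, ?_⟩
      · simpa [Submodule.Quotient.mk_eq_zero] using hx_not
      · rw [← Submodule.Quotient.mk_smul, Submodule.Quotient.mk_eq_zero]
        exact hsx0
    exact hs this
end

section
/- Let R be a commutative ring, M an R-module, 𝔭 a prime ideal of R, and N = ⋂_{i=1}^r N_i a primary decomposition of a submodule N of M with N_i 𝔭_i-primary in M. Assume 𝔭 ≠ 𝔭_i for all i. Then there exists a multiplicatively closed subset T of R with T ⊋ R ∖ 𝔭 and T^M(N) = (R ∖ 𝔭)^M(N). -/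
/-- if `𝔭` is a prime different from all primes of a primary
decomposition of `N` in `M`, then there is a multiplicatively closed
`T ⊋ R ∖ 𝔭` with `T^M(N) = (R ∖ 𝔭)^M(N)`. -/
theorem statement7 {R M ι : Type*} [CommRing R] [AddCommGroup M] [Module R M]
    [Finite ι] (𝔭 : Ideal R) [𝔭.IsPrime]
    (N : Submodule R M) (Ni : ι → Submodule R M) (p : ι → Ideal R)
    (hp : ∀ i, (p i).IsPrime) (hNi : ∀ i, IsPrimaryIn R M (Ni i) (p i))
    (hdec : N = ⨅ i, Ni i)
    (hne : ∀ i, 𝔭 ≠ p i) :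
    ∃ T : Submonoid R, ((𝔭 : Set R))ᶜ ⊂ (T : Set R) ∧
      sComp R M (T : Set R) N = sComp R M ((𝔭 : Set R))ᶜ N := by
  classical
  have hPrime : 𝔭.IsPrime := inferInstance
  have := Fintype.ofFinite ι
  have h1 : (1 : R) ∉ 𝔭 := fun h => hPrime.ne_top (Ideal.eq_top_iff_one 𝔭 |>.mpr h)
  -- find a ∈ 𝔭 avoiding all p i contained in 𝔭
  obtain ⟨a, ha𝔭, haJ⟩ : ∃ a ∈ 𝔭, ∀ i, p i ≤ 𝔭 → a ∉ p i := by
    set Js : Finset ι := Finset.univ.filter (fun i => p i ≤ 𝔭) with hJs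
    rcases Js.eq_empty_or_nonempty with h | ⟨j, hj⟩
    · refine ⟨0, 𝔭.zero_mem, fun i hi => ?_⟩
      have : i ∈ Js := Finset.mem_filter.mpr ⟨Finset.mem_univ i, hi⟩
      simp [h] at this
    · have hsub : ¬ ((𝔭 : Set R) ⊆ ⋃ i ∈ (Js : Set ι), ↑(p i)) := by
        rw [Ideal.subset_union_prime j j (fun i _ _ _ => hp i)]
        rintro ⟨i, hiJ, hle⟩
        exact hne i (le_antisymm hle (Finset.mem_filter.mp hiJ).2)
      obtain ⟨a, ha, hnot⟩ := Set.not_subset.mp hsub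
      refine ⟨a, ha, fun i hi hai => hnot ?_⟩
      exact Set.mem_biUnion (Finset.mem_coe.mpr (Finset.mem_filter.mpr ⟨Finset.mem_univ i, hi⟩)) hai
  have hNle : ∀ i, N ≤ Ni i := fun i => hdec ▸ iInf_le _ i
  refine ⟨{ carrier := {r | ∃ n : ℕ, ∃ s, s ∉ 𝔭 ∧ r = a ^ n * s},
            one_mem' := ⟨0, 1, h1, by ring⟩,
            mul_mem' := ?_ }, ?_, ?_⟩
  · rintro r r' ⟨n, s, hs, rfl⟩ ⟨m, s', hs', rfl⟩
    exact ⟨n + m, s * s', fun h => (hPrime.mem_or_mem h).elim hs hs', by ring⟩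
  · constructor
    · intro s hs
      exact ⟨0, s, hs, by ring⟩
    · intro hsup
      have haT : a ∈ {r | ∃ n : ℕ, ∃ s, s ∉ 𝔭 ∧ r = a ^ n * s} := ⟨1, 1, h1, by ring⟩
      exact (hsup haT) ha𝔭
  · apply Set.Subset.antisymm
    · rintro x ⟨t, ⟨n, s, hs, rfl⟩, htx⟩
      -- x lies in every Ni i with p i ≤ 𝔭
      have hxJ : ∀ i, p i ≤ 𝔭 → x ∈ Ni i := by
        intro i hi
        have ht_ni : a ^ n * s ∉ p i := by
          intro h
          rcases (hp i).mem_or_mem h with h' | h'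
          · exact haJ i hi ((hp i).mem_of_pow_mem n h')
          · exact hs (hi h')
        by_contra hx
        refine ht_ni ((hNi i).2.1 (a ^ n * s) ⟨Submodule.Quotient.mk x, ?_, ?_⟩)
        · simpa [Submodule.Quotient.mk_eq_zero] using hx
        · rw [← Submodule.Quotient.mk_smul, Submodule.Quotient.mk_eq_zero]
          exact hNle i htx
      have key : ∀ i, ∃ u : R, u ∉ 𝔭 ∧ u • x ∈ Ni i := by
        intro i
        by_cases hi : p i ≤ 𝔭
        · exact ⟨1, h1, by simpa using hxJ i hi⟩
        · obtain ⟨c, hc, hc𝔭⟩ := SetLike.not_le_iff_exists.mp hi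
          obtain ⟨m, hm⟩ := (hNi i).2.2 c hc (Submodule.Quotient.mk x)
          rw [← Submodule.Quotient.mk_smul, Submodule.Quotient.mk_eq_zero] at hm
          exact ⟨c ^ m, fun h => hc𝔭 (hPrime.mem_of_pow_mem m h), hm⟩
      choose u hu𝔭 hux using key
      refine ⟨∏ i, u i, ?_, ?_⟩
      · exact Finset.prod_induction u (· ∉ 𝔭)
          (fun b b' hb hb' h => (hPrime.mem_or_mem h).elim hb hb') h1
          (fun i _ => hu𝔭 i)
      · rw [hdec, Submodule.mem_iInf]
        intro i
        have hv : (∏ j, u j) = (∏ j ∈ Finset.univ.erase i, u j) * u i :=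
          (Finset.prod_erase_mul _ _ (Finset.mem_univ i)).symm
        rw [hv, mul_smul]
        exact Submodule.smul_mem _ _ (hux i)
    · rintro x ⟨s, hs, hsx⟩
      exact ⟨s, ⟨0, s, hs, by ring⟩, hsx⟩
end

section
/- Let R be a commutative ring, M an R-module, and 𝔭 a prime ideal of R. Then 𝔭 is Krull-associated to M (i.e. for every multiplicatively closed subset T of R with T ⊋ R ∖ 𝔭 one has T^M((0)) ⊋ (R ∖ 𝔭)^M((0))) if and only if every element of the maximal ideal 𝔭·R_𝔭 of the localization R_𝔭 is a zero divisor for the localized module M_𝔭. -/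
/-! Write `C` for the `(R ∖ 𝔭)`-component of `0`, the kernel of `M → M_𝔭`. Both sides of the
equivalence say that every `t ∈ 𝔭` sends some `m ∉ C` into `C`. For `M_𝔭` this is because
`(t/s) • (m/u) = 0` iff `t • m ∈ C`. For Krull-association, enlarge `R ∖ 𝔭` by the powers of `t`:
an element `x ∉ C` killed by some `u tⁿ` has `tⁿ x ∈ C`, and the last `tᵏ x ∉ C` is such an `m`;
conversely, such an `m` for `t ∈ T ∖ (R ∖ 𝔭)` lies in `T^M(0) ∖ C`. -/

section

variable {R M : Type*} [CommRing R] [AddCommGroup M] [Module R M]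

theorem sComp_mono {S S' : Set R} (h : S ⊆ S') (N : Submodule R M) :
    sComp R M S N ⊆ sComp R M S' N :=
  fun _ ⟨s, hs, hx⟩ ↦ ⟨s, h hs, hx⟩

theorem exists_notMem_smul_mem_of_pow_smul_mem {A X : Type*} [Monoid A] [MulAction A X]
    {C : Set X} {x : X} (hx : x ∉ C) (t : A) {n : ℕ} (hn : t ^ n • x ∈ C) :
    ∃ y ∉ C, t • y ∈ C := by
  obtain ⟨k, hk, hk1⟩ :=
    Nat.exists_not_and_succ_of_not_zero_of_exists (p := fun k ↦ t ^ k • x ∈ C)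
      (by simpa using hx) ⟨n, hn⟩
  exact ⟨t ^ k • x, hk, by rwa [smul_smul, ← pow_succ']⟩

theorem LocalizedModule.mk_eq_zero_iff {S : Submonoid R} {m : M} {s : S} :
    LocalizedModule.mk m s = 0 ↔ m ∈ sComp R M S ⊥ := by
  rw [← LocalizedModule.zero_mk 1, LocalizedModule.mk_eq]
  simp [sComp, Submonoid.smul_def]

theorem isZeroDivisorFor_localizationMk_iff (S : Submonoid R) (t : R) (s : S) :
    IsZeroDivisorFor (Localization S) (LocalizedModule S M) (Localization.mk t s) ↔
      ∃ m ∉ sComp R M S ⊥, t • m ∈ sComp R M S ⊥ := by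
  constructor
  · rintro ⟨y, hy, hty⟩
    induction y using LocalizedModule.induction_on with
    | h m u =>
      rw [LocalizedModule.mk_smul_mk, LocalizedModule.mk_eq_zero_iff] at hty
      exact ⟨m, fun hm ↦ hy (LocalizedModule.mk_eq_zero_iff.mpr hm), hty⟩
  · rintro ⟨m, hm, htm⟩
    refine ⟨LocalizedModule.mk m 1, fun h ↦ hm (LocalizedModule.mk_eq_zero_iff.mp h), ?_⟩
    rwa [LocalizedModule.mk_smul_mk, LocalizedModule.mk_eq_zero_iff]

theorem krullAssociated_iff (𝔭 : Ideal R) [𝔭.IsPrime] :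
    KrullAssociated R M 𝔭 ↔
      ∀ t ∈ 𝔭, ∃ m ∉ sComp R M (𝔭 : Set R)ᶜ ⊥, t • m ∈ sComp R M (𝔭 : Set R)ᶜ ⊥ := by
  constructor
  · intro hK t ht
    let T := 𝔭.primeCompl ⊔ Submonoid.powers t
    have hT : (𝔭 : Set R)ᶜ ⊂ T :=
      (Set.ssubset_iff_of_subset (le_sup_left : 𝔭.primeCompl ≤ T)).mpr
        ⟨t, (le_sup_right : Submonoid.powers t ≤ T) (Submonoid.mem_powers t), by simpa⟩
    obtain ⟨x, ⟨_, hr, hrx⟩, hx⟩ := Set.exists_of_ssubset (hK T hT)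
    obtain ⟨u, hu, _, ⟨n, rfl⟩, rfl⟩ := Submonoid.mem_sup.mp hr
    refine exists_notMem_smul_mem_of_pow_smul_mem hx t (n := n) ⟨u, hu, ?_⟩
    rwa [smul_smul]
  · intro h T hT
    obtain ⟨t, htT, ht⟩ := Set.exists_of_ssubset hT
    obtain ⟨m, hm, u, hu, hutm⟩ := h t (by simpa using ht)
    refine (Set.ssubset_iff_of_subset (sComp_mono hT.subset ⊥)).mpr
      ⟨m, ⟨u * t, T.mul_mem (hT.subset hu) htT, ?_⟩, hm⟩
    rwa [mul_smul]

end

/-- `𝔭` is Krull-associated to `M` iff every element of the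
maximal ideal `𝔭·R_𝔭` of `R_𝔭` is a zero divisor for `M_𝔭`. -/
theorem statement8 {R M : Type*} [CommRing R] [AddCommGroup M] [Module R M]
    (𝔭 : Ideal R) [𝔭.IsPrime] :
    KrullAssociated R M 𝔭 ↔
      ∀ a ∈ Ideal.map (algebraMap R (Localization.AtPrime 𝔭)) 𝔭,
        IsZeroDivisorFor (Localization.AtPrime 𝔭) (LocalizedModule 𝔭.primeCompl M) a := by
  rw [krullAssociated_iff]
  constructor
  · intro h a ha
    induction a using Localization.induction_on with
    | H ts =>
      obtain ⟨t, s⟩ := ts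
      rw [Localization.AtPrime.map_eq_maximalIdeal, Localization.mk_eq_mk'_apply,
        IsLocalization.AtPrime.mk'_mem_maximal_iff _ 𝔭] at ha
      exact (isZeroDivisorFor_localizationMk_iff _ t s).mpr (h t ha)
  · intro h t ht
    have hzd := h _ (Ideal.mem_map_of_mem _ ht)
    rwa [← Localization.mk_one_eq_algebraMap, isZeroDivisorFor_localizationMk_iff] at hzd
end

section
/- Let R be a commutative ring, M an R-module, S a multiplicatively closed subset of R, and 𝔓 a prime ideal of the localization R_S. Then 𝔓 is Krull-associated to the R_S-module M_S if and only if the preimage 𝔓 ∩ R of 𝔓 in R is Krull-associated to M. -/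
/-! Since `T^L((0))` grows with `T`, Krull-associatedness of a prime `p` only has to be tested
on the monoids generated by `A ∖ p` and a single `a ∈ p`; this turns it into the element-wise
condition that every `a ∈ p` kills, up to a power, some element outside `(A ∖ p)^L((0))`.
That condition transfers along `M → M_S`: a fraction `x / u` lies in
`(R_S ∖ 𝔓)^{M_S}((0))` exactly when `x` lies in `(R ∖ (𝔓 ∩ R))^M((0))`, because the elements
of `S` are units of `R_S` and hence avoid `𝔓`. -/

section KrullAssociated

variable {A L : Type*} [CommRing A] [AddCommGroup L] [Module A L]

theorem sComp_mono_s9 {S₁ S₂ : Set A} (h : S₁ ⊆ S₂) (N : Submodule A L) :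
    sComp A L S₁ N ⊆ sComp A L S₂ N := fun _ ⟨s, hs, hsx⟩ ↦ ⟨s, h hs, hsx⟩

theorem smul_mem_sComp_compl_iff {p : Ideal A} [p.IsPrime] {u : A} (hu : u ∉ p) (x : L) :
    u • x ∈ sComp A L (p : Set A)ᶜ ⊥ ↔ x ∈ sComp A L (p : Set A)ᶜ ⊥ := by
  constructor
  · rintro ⟨v, hv, hvux⟩
    exact ⟨v * u, p.primeCompl.mul_mem hv hu, by rwa [mul_smul]⟩
  · rintro ⟨v, hv, hvx⟩
    refine ⟨v, hv, ?_⟩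
    rw [Submodule.mem_bot] at hvx ⊢
    rw [smul_comm, hvx, smul_zero]

theorem krullAssociated_iff_s9 {p : Ideal A} [p.IsPrime] :
    KrullAssociated A L p ↔
      ∀ a ∈ p, ∃ y ∉ sComp A L (p : Set A)ᶜ ⊥, ∃ n : ℕ, a ^ n • y = 0 := by
  constructor
  · intro H a ha
    have hsub : (p : Set A)ᶜ ⊆ (Submonoid.powers a ⊔ p.primeCompl : Submonoid A) :=
      fun u hu ↦ (le_sup_right : p.primeCompl ≤ _) hu
    have haT : a ∈ Submonoid.powers a ⊔ p.primeCompl :=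
      (le_sup_left : Submonoid.powers a ≤ _) (Submonoid.mem_powers a)
    obtain ⟨x, ⟨t, ht, htx⟩, hx⟩ :=
      Set.exists_of_ssubset (H _ ⟨hsub, fun h ↦ h haT ha⟩)
    obtain ⟨_, ⟨n, rfl⟩, u, hu, rfl⟩ := Submonoid.mem_sup.1 ht
    refine ⟨u • x, (smul_mem_sComp_compl_iff hu x).not.2 hx, n, ?_⟩
    rwa [Submodule.mem_bot, mul_smul] at htx
  · intro H T hT
    obtain ⟨a, haT, ha⟩ := Set.exists_of_ssubset hT
    obtain ⟨y, hy, n, hny⟩ := H a (not_not.1 ha)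
    refine ⟨sComp_mono_s9 hT.subset ⊥, fun h ↦ hy (h ?_)⟩
    exact ⟨a ^ n, pow_mem haT n, (Submodule.mem_bot A).2 hny⟩

end KrullAssociated

section Localization

variable {R M : Type*} [CommRing R] [AddCommGroup M] [Module R M] {S : Submonoid R}

theorem LocalizedModule.mk_eq_zero_iff_s9 {x : M} {u : S} :
    LocalizedModule.mk x u = 0 ↔ ∃ c : S, c • x = 0 := by
  rw [IsLocalizedModule.mk_eq_mk', IsLocalizedModule.mk'_eq_zero']

theorem Localization.mk_mem_iff {𝔓 : Ideal (Localization S)} {a : R} {s : S} :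
    Localization.mk a s ∈ 𝔓 ↔ a ∈ 𝔓.comap (algebraMap R (Localization S)) := by
  rw [Localization.mk_eq_mk', IsLocalization.mk'_mem_iff, Ideal.mem_comap]

theorem coe_notMem_comap_algebraMap {𝔓 : Ideal (Localization S)} [𝔓.IsPrime] (s : S) :
    (s : R) ∉ 𝔓.comap (algebraMap R (Localization S)) := fun h ↦
  Ideal.IsPrime.ne_top ‹_› (𝔓.eq_top_of_isUnit_mem h (IsLocalization.map_units _ s))

theorem LocalizedModule.mk_mem_sComp_compl_iff {𝔓 : Ideal (Localization S)} [𝔓.IsPrime]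
    (x : M) (u : S) :
    LocalizedModule.mk x u ∈ sComp (Localization S) (LocalizedModule S M) (𝔓 : Set _)ᶜ ⊥ ↔
      x ∈ sComp R M (𝔓.comap (algebraMap R (Localization S)) : Set R)ᶜ ⊥ := by
  constructor
  · rintro ⟨z, hz, hzx⟩
    induction z using Localization.induction_on with | H y => ?_
    obtain ⟨a, t⟩ := y
    rw [Submodule.mem_bot, LocalizedModule.mk_smul_mk, mk_eq_zero_iff_s9] at hzx
    obtain ⟨c, hc⟩ := hzx
    refine ⟨c * a, (Ideal.primeCompl _).mul_mem (coe_notMem_comap_algebraMap c)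
      (Localization.mk_mem_iff.not.1 hz), ?_⟩
    rwa [Submodule.mem_bot, mul_smul]
  · rintro ⟨r, hr, hrx⟩
    refine ⟨algebraMap R _ r, hr, ?_⟩
    rw [Submodule.mem_bot] at hrx ⊢
    rw [algebraMap_smul, LocalizedModule.smul'_mk, hrx, LocalizedModule.zero_mk]

end Localization

/-- a prime `𝔓` of `R_S` is Krull-associated to `M_S` iff its
preimage `𝔓 ∩ R` is Krull-associated to `M`. -/
theorem statement9 {R M : Type*} [CommRing R] [AddCommGroup M] [Module R M]
    (S : Submonoid R) (𝔓 : Ideal (Localization S)) [𝔓.IsPrime] :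
    KrullAssociated (Localization S) (LocalizedModule S M) 𝔓 ↔
      KrullAssociated R M (𝔓.comap (algebraMap R (Localization S))) := by
  rw [krullAssociated_iff_s9, krullAssociated_iff_s9]
  constructor
  · intro H a ha
    obtain ⟨z, hz, n, hnz⟩ := H (algebraMap R _ a) ha
    induction z using LocalizedModule.induction_on with | h x u => ?_
    rw [← map_pow, algebraMap_smul, LocalizedModule.smul'_mk,
      LocalizedModule.mk_eq_zero_iff_s9] at hnz
    obtain ⟨c, hc⟩ := hnz
    refine ⟨(c : R) • x, ?_, n, by rwa [smul_comm]⟩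
    rw [smul_mem_sComp_compl_iff (coe_notMem_comap_algebraMap c),
      ← LocalizedModule.mk_mem_sComp_compl_iff x u]
    exact hz
  · intro H z hz
    induction z using Localization.induction_on with | H y => ?_
    obtain ⟨a, s⟩ := y
    obtain ⟨x, hx, n, hnx⟩ := H a (Localization.mk_mem_iff.1 hz)
    refine ⟨LocalizedModule.mk x 1, (LocalizedModule.mk_mem_sComp_compl_iff x 1).not.2 hx,
      n, ?_⟩
    rw [Localization.mk_pow, LocalizedModule.mk_smul_mk, hnx, LocalizedModule.zero_mk]
end

section
/- Let R be a commutative ring, M an R-module, 𝔭 a prime ideal of R, and x ∈ M. The following are equivalent: (1) 𝔭 is minimal among the prime ideals containing the annihilator Ann_R(x); (2) the image x/1 of x in the localization M_𝔭 is nonzero, and every element of 𝔭·R_𝔭 is nilpotent for the cyclic R_𝔭-module R_𝔭·(x/1); (3) R_𝔭·(x/1) is a (𝔭·R_𝔭)-coprimary R_𝔭-module. -/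
/-! Localizing at `𝔭` turns `Ann_R(x)` into `Ann_{R_𝔭}(x/1)` and `𝔭` into the maximal ideal `𝔪`
of `R_𝔭`, so `𝔭` is minimal over `Ann_R(x)` iff `𝔪` is minimal over `Ann(x/1)`. In a local ring
this means `Ann(x/1) ≠ R_𝔭` and `𝔪 ⊆ √Ann(x/1)`, i.e. `x/1 ≠ 0` and every element of `𝔪` is
nilpotent on `x/1`. Units are never zero divisors, so the remaining condition of
`𝔪`-coprimarity holds automatically over a local ring. -/

open IsLocalRing

section Cyclic

variable {A L : Type*} [CommRing A] [AddCommGroup L] [Module A L]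

theorem isNilpotentFor_span_singleton_iff (y : L) (a : A) :
    IsNilpotentFor A (A ∙ y) a ↔ ∃ n : ℕ, a ^ n • y = 0 := by
  refine ⟨fun h ↦ ?_, fun ⟨n, hn⟩ ⟨z, hz⟩ ↦ ?_⟩
  · obtain ⟨n, hn⟩ := h ⟨y, Submodule.mem_span_singleton_self y⟩
    exact ⟨n, congrArg Subtype.val hn⟩
  · obtain ⟨c, rfl⟩ := Submodule.mem_span_singleton.mp hz
    exact ⟨n, Subtype.ext <| by simp [smul_comm (a ^ n) c, hn]⟩

theorem exists_ne_zero_span_singleton_iff (y : L) :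
    (∃ z : A ∙ y, z ≠ 0) ↔ y ≠ 0 := by
  rw [← nontrivial_iff_exists_ne, Submodule.nontrivial_iff_ne_bot, Ne,
    Submodule.span_singleton_eq_bot]

theorem IsLocalRing.mem_maximalIdeal_of_isZeroDivisorFor [IsLocalRing A] {a : A}
    (ha : IsZeroDivisorFor A L a) : a ∈ maximalIdeal A := by
  obtain ⟨y, hy, hay⟩ := ha
  exact fun hu ↦ hy <| hu.smul_eq_zero.mp hay

theorem IsLocalRing.isCoprimaryFor_maximalIdeal_iff [IsLocalRing A] :
    IsCoprimaryFor A L (maximalIdeal A) ↔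
      (∃ y : L, y ≠ 0) ∧ ∀ a ∈ maximalIdeal A, IsNilpotentFor A L a :=
  ⟨fun h ↦ ⟨h.1, h.2.2⟩, fun h ↦ ⟨h.1, fun _ ↦ mem_maximalIdeal_of_isZeroDivisorFor, h.2⟩⟩

theorem IsLocalRing.maximalIdeal_mem_minimalPrimes_iff [IsLocalRing A] (J : Ideal A) :
    maximalIdeal A ∈ J.minimalPrimes ↔ J ≠ ⊤ ∧ maximalIdeal A ≤ J.radical := by
  refine ⟨fun h ↦ ⟨?_, ?_⟩, fun ⟨hJ, hm⟩ ↦ ?_⟩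
  · exact ne_top_of_le_ne_top (maximalIdeal.isMaximal A).ne_top h.1.2
  · rw [← Ideal.sInf_minimalPrimes]
    exact le_sInf fun p hp ↦ h.2 hp.1 (le_maximalIdeal hp.1.1.ne_top)
  · have hrad : J.radical = maximalIdeal A :=
      le_antisymm (le_maximalIdeal (Ideal.radical_eq_top.not.mpr hJ)) hm
    rw [← Ideal.radical_minimalPrimes, hrad, Ideal.minimalPrimes_eq_subsingleton_self]
    rfl

theorem IsLocalRing.maximalIdeal_mem_minimalPrimes_torsionOf_iff [IsLocalRing A] (y : L) :
    maximalIdeal A ∈ (Ideal.torsionOf A L y).minimalPrimes ↔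
      y ≠ 0 ∧ ∀ a ∈ maximalIdeal A, IsNilpotentFor A (A ∙ y) a := by
  simp only [maximalIdeal_mem_minimalPrimes_iff, Ne, Ideal.torsionOf_eq_top_iff,
    isNilpotentFor_span_singleton_iff, SetLike.le_def, Ideal.mem_radical_iff,
    Ideal.mem_torsionOf_iff]

end Cyclic

theorem Ideal.map_torsionOf_of_isLocalizedModule {R M : Type*} [CommRing R] [AddCommGroup M]
    [Module R M] (S : Submonoid R) {R' M' : Type*} [CommRing R'] [Algebra R R']
    [IsLocalization S R'] [AddCommGroup M'] [Module R M'] [Module R' M'] [IsScalarTower R R' M']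
    (f : M →ₗ[R] M') [IsLocalizedModule S f] (x : M) :
    (Ideal.torsionOf R M x).map (algebraMap R R') = Ideal.torsionOf R' M' (f x) := by
  refine le_antisymm (Ideal.map_le_iff_le_comap.mpr fun r hr ↦ ?_) fun a ha ↦ ?_
  · rw [Ideal.mem_comap, Ideal.mem_torsionOf_iff, algebraMap_smul, ← map_smul,
      (Ideal.mem_torsionOf_iff x r).mp hr, map_zero]
  · obtain ⟨⟨r, s⟩, rfl⟩ := IsLocalization.mk'_surjective S a
    have hr : f (r • x) = 0 := by
      rw [map_smul, ← algebraMap_smul R', ← IsLocalization.mk'_spec R' r s, mul_comm, mul_smul,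
        (Ideal.mem_torsionOf_iff _ _).mp ha, smul_zero]
    obtain ⟨t, ht⟩ := (IsLocalizedModule.eq_zero_iff S f).mp hr
    rw [IsLocalization.mk'_mem_map_algebraMap_iff]
    exact ⟨t, t.2, (Ideal.mem_torsionOf_iff x _).mpr (by rwa [mul_smul])⟩

theorem IsLocalization.AtPrime.maximalIdeal_mem_minimalPrimes_map_iff {R R' : Type*}
    [CommRing R] [CommRing R'] [Algebra R R'] (𝔭 : Ideal R) [𝔭.IsPrime]
    [IsLocalization.AtPrime R' 𝔭] [IsLocalRing R'] (I : Ideal R) :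
    maximalIdeal R' ∈ (I.map (algebraMap R R')).minimalPrimes ↔ 𝔭 ∈ I.minimalPrimes := by
  rw [IsLocalization.minimalPrimes_map 𝔭.primeCompl, Set.mem_preimage,
    IsLocalization.AtPrime.under_maximalIdeal R' 𝔭]

/-- for a prime `𝔭` and `x ∈ M`, the following are equivalent:
(1) `𝔭` is minimal among the primes containing `Ann_R(x)`;
(2) `x/1 ≠ 0` in `M_𝔭` and every element of `𝔭·R_𝔭` is nilpotent for `R_𝔭·(x/1)`;
(3) `R_𝔭·(x/1)` is `𝔭·R_𝔭`-coprimary. -/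
theorem statement10 {R M : Type*} [CommRing R] [AddCommGroup M] [Module R M]
    (𝔭 : Ideal R) [𝔭.IsPrime] (x : M) :
    ((𝔭 ∈ (Ideal.torsionOf R M x).minimalPrimes) ↔
      (LocalizedModule.mkLinearMap 𝔭.primeCompl M x ≠ 0 ∧
        ∀ a ∈ Ideal.map (algebraMap R (Localization.AtPrime 𝔭)) 𝔭,
          IsNilpotentFor (Localization.AtPrime 𝔭)
            (Submodule.span (Localization.AtPrime 𝔭)
              {LocalizedModule.mkLinearMap 𝔭.primeCompl M x}) a)) ∧
    ((𝔭 ∈ (Ideal.torsionOf R M x).minimalPrimes) ↔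
      IsCoprimaryFor (Localization.AtPrime 𝔭)
        (Submodule.span (Localization.AtPrime 𝔭)
          {LocalizedModule.mkLinearMap 𝔭.primeCompl M x})
        (Ideal.map (algebraMap R (Localization.AtPrime 𝔭)) 𝔭)) := by
  rw [IsLocalization.AtPrime.map_eq_maximalIdeal, isCoprimaryFor_maximalIdeal_iff,
    exists_ne_zero_span_singleton_iff, ← maximalIdeal_mem_minimalPrimes_torsionOf_iff,
    ← Ideal.map_torsionOf_of_isLocalizedModule 𝔭.primeCompl,
    IsLocalization.AtPrime.maximalIdeal_mem_minimalPrimes_map_iff 𝔭]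
  exact ⟨.rfl, .rfl⟩
end

section
/- Let R be a commutative ring, M an R-module, x ∈ M with x ≠ 0, and let 𝔭 be a prime ideal that is minimal among the prime ideals containing Ann_R(x). Then 𝔭 is Krull-associated to M. In particular every weakly associated prime of M is Krull-associated to M. -/
/-!
Pick `t ∈ T ∩ 𝔭`. The monoid generated by `R ∖ 𝔭` and `t` meets `Ann(x)`: a prime containing
`Ann(x)` and avoiding it would lie in `𝔭` without containing `t`, contradicting minimality.
So `s t ^ n x = 0` for some `s ∉ 𝔭`, and `s • x` lies in the `T`-component of `0` but not in
the `(R ∖ 𝔭)`-component, since `u s x = 0` with `u ∉ 𝔭` would put `u s` in `Ann(x) ⊆ 𝔭`.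
-/

theorem Ideal.exists_mul_pow_mem_of_mem_minimalPrimes {R : Type*} [CommSemiring R]
    {I 𝔭 : Ideal R} (h𝔭 : 𝔭 ∈ I.minimalPrimes) {t : R} (ht : t ∈ 𝔭) :
    ∃ s ∉ 𝔭, ∃ n : ℕ, s * t ^ n ∈ I := by
  have := h𝔭.1.1
  by_contra! hI
  let S : Submonoid R := 𝔭.primeCompl ⊔ Submonoid.powers t
  have hdisj : Disjoint (I : Set R) S := Set.disjoint_left.mpr fun a haI haS => by
    obtain ⟨s, hs, _, ⟨n, rfl⟩, rfl⟩ := Submonoid.mem_sup.mp haS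
    exact hI s hs n haI
  obtain ⟨q, hq, hIq, hqS⟩ := Ideal.exists_le_prime_disjoint I S hdisj
  have hq𝔭 : q ≤ 𝔭 := fun a haq => by_contra fun ha𝔭 =>
    Set.disjoint_left.mp hqS haq (Submonoid.mem_sup_left (S := 𝔭.primeCompl) ha𝔭)
  exact Set.disjoint_left.mp hqS (h𝔭.2 ⟨hq, hIq⟩ hq𝔭 ht)
    (Submonoid.mem_sup_right (Submonoid.mem_powers t))

section sComp

variable {R M : Type*} [CommRing R] [AddCommGroup M] [Module R M]

theorem smul_notMem_sComp_compl_bot {𝔭 : Ideal R} [𝔭.IsPrime] {x : M}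
    (hx : Ideal.torsionOf R M x ≤ 𝔭) {s : R} (hs : s ∉ 𝔭) :
    s • x ∉ sComp R M (𝔭 : Set R)ᶜ ⊥ := by
  rintro ⟨u, hu, hux⟩
  rw [Submodule.mem_bot, smul_smul, ← Ideal.mem_torsionOf_iff] at hux
  exact (Ideal.IsPrime.mem_or_mem ‹_› (hx hux)).elim hu hs

end sComp

theorem statement11_general {R M : Type*} [CommRing R] [AddCommGroup M] [Module R M]
    (𝔭 : Ideal R) (x : M)
    (hmin : 𝔭 ∈ (Ideal.torsionOf R M x).minimalPrimes) :
    KrullAssociated R M 𝔭 := by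
  intro T hT
  have := hmin.1.1
  obtain ⟨t, htT, ht𝔭⟩ := Set.exists_of_ssubset hT
  obtain ⟨s, hs, n, hst⟩ :=
    Ideal.exists_mul_pow_mem_of_mem_minimalPrimes hmin (Set.notMem_compl_iff.mp ht𝔭)
  have hsx : s • x ∈ sComp R M T ⊥ := by
    refine ⟨t ^ n, pow_mem htT n, ?_⟩
    rwa [Submodule.mem_bot, smul_smul, mul_comm, ← Ideal.mem_torsionOf_iff]
  exact Set.ssubset_iff_of_subset (sComp_mono hT.le ⊥) |>.mpr
    ⟨s • x, hsx, smul_notMem_sComp_compl_bot hmin.1.2 hs⟩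

/-- if `x ≠ 0` and `𝔭` is minimal among the primes containing
`Ann_R(x)`, then `𝔭` is Krull-associated to `M`; in particular every weakly
associated prime of `M` is Krull-associated to `M`. -/
theorem statement11 {R M : Type*} [CommRing R] [AddCommGroup M] [Module R M]
    (𝔭 : Ideal R) (x : M) (hx : x ≠ 0)
    (hmin : 𝔭 ∈ (Ideal.torsionOf R M x).minimalPrimes) :
    KrullAssociated R M 𝔭 :=
  statement11_general 𝔭 x hmin
end

section
/- Let R be a commutative ring, M an R-module, S a multiplicatively closed subset of R, and 𝔓 a prime ideal of the localization R_S. Then 𝔓 is weakly associated to the R_S-module M_S (i.e. 𝔓 is minimal among primes of R_S containing the annihilator of some element of M_S) if and only if the preimage 𝔓 ∩ R of 𝔓 in R is weakly associated to M. -/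
namespace LocalizedModule

variable {R M : Type*} [CommRing R] [AddCommGroup M] [Module R M] (S : Submonoid R)

theorem torsionOf_mk (x : M) (s : S) :
    Ideal.torsionOf (Localization S) (LocalizedModule S M) (mk x s) =
      (Ideal.torsionOf R M x).map (algebraMap R (Localization S)) := by
  ext z
  induction z using Localization.induction_on with
  | H p =>
    obtain ⟨a, t⟩ := p
    rw [Ideal.mem_torsionOf_iff, Localization.mk_eq_mk',
      IsLocalization.mk'_mem_map_algebraMap_iff S, ← Localization.mk_eq_mk', mk_smul_mk,
      ← zero_mk (1 : S), mk_eq]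
    simp only [one_smul, smul_zero, Submonoid.smul_def, smul_smul, Ideal.mem_torsionOf_iff]
    exact ⟨fun ⟨u, hu⟩ ↦ ⟨u, u.2, hu⟩, fun ⟨u, hu, h⟩ ↦ ⟨⟨u, hu⟩, h⟩⟩

end LocalizedModule

theorem statement12_general {R M : Type*} [CommRing R] [AddCommGroup M] [Module R M]
    (S : Submonoid R) (𝔓 : Ideal (Localization S)) :
    (∃ y : LocalizedModule S M,
        𝔓 ∈ (Ideal.torsionOf (Localization S) (LocalizedModule S M) y).minimalPrimes) ↔
      ∃ x : M, 𝔓.comap (algebraMap R (Localization S)) ∈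
        (Ideal.torsionOf R M x).minimalPrimes := by
  have minimal_over_mk_iff (x : M) (s : S) :
      𝔓 ∈ (Ideal.torsionOf (Localization S) (LocalizedModule S M)
          (LocalizedModule.mk x s)).minimalPrimes ↔
        𝔓.comap (algebraMap R (Localization S)) ∈ (Ideal.torsionOf R M x).minimalPrimes := by
    rw [LocalizedModule.torsionOf_mk, IsLocalization.minimalPrimes_map S]
    rfl
  constructor
  · rintro ⟨y, hy⟩
    induction y using LocalizedModule.induction_on with
    | h x s => exact ⟨x, (minimal_over_mk_iff x s).mp hy⟩
  · rintro ⟨x, hx⟩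
    exact ⟨LocalizedModule.mk x 1, (minimal_over_mk_iff x 1).mpr hx⟩

/-- a prime `𝔓` of `R_S` is weakly associated to `M_S` iff its
preimage `𝔓 ∩ R` is weakly associated to `M`. -/
theorem statement12 {R M : Type*} [CommRing R] [AddCommGroup M] [Module R M]
    (S : Submonoid R) (𝔓 : Ideal (Localization S)) [𝔓.IsPrime] :
    (∃ y : LocalizedModule S M,
        𝔓 ∈ (Ideal.torsionOf (Localization S) (LocalizedModule S M) y).minimalPrimes) ↔
      ∃ x : M, 𝔓.comap (algebraMap R (Localization S)) ∈
        (Ideal.torsionOf R M x).minimalPrimes :=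
  statement12_general S 𝔓
end

section
/- Let R be a commutative ring, M an R-module, and (𝔭_i)_{i ∈ I} a family of prime ideals each Krull-associated to M. If the union 𝔭 := ⋃_{i ∈ I} 𝔭_i is a prime ideal of R, then 𝔭 is Krull-associated to M. -/
section KrullAssociated

variable {R M : Type*} [CommRing R] [AddCommGroup M] [Module R M]

theorem mem_sComp_bot_iff {S : Set R} {x : M} : x ∈ sComp R M S ⊥ ↔ ∃ s ∈ S, s • x = 0 := by
  simp only [sComp, Set.mem_ofPred_eq, Submodule.mem_bot]

theorem krullAssociated_of_forall_mem {p : Ideal R}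
    (h : ∀ t ∈ p, ∃ x : M, (∃ n : ℕ, t ^ n • x = 0) ∧ ∀ v ∉ p, v • x ≠ 0) :
    KrullAssociated R M p := by
  intro T hT
  obtain ⟨t, htT, htp⟩ := Set.exists_of_ssubset hT
  obtain ⟨x, ⟨n, htx⟩, hx⟩ := h t (not_not.mp htp)
  refine Set.ssubset_iff_subset_ne.mpr ⟨sComp_mono hT.subset ⊥, fun hEq => ?_⟩
  have hxT : x ∈ sComp R M (T : Set R) ⊥ :=
    mem_sComp_bot_iff.mpr ⟨t ^ n, pow_mem htT n, htx⟩
  obtain ⟨v, hv, hvx⟩ := mem_sComp_bot_iff.mp (hEq ▸ hxT)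
  exact hx v hv hvx

theorem KrullAssociated.exists_pow_smul_eq_zero {p : Ideal R} [p.IsPrime]
    (h : KrullAssociated R M p) {t : R} (ht : t ∈ p) :
    ∃ x : M, (∃ n : ℕ, t ^ n • x = 0) ∧ ∀ v ∉ p, v • x ≠ 0 := by
  have hlt : (p : Set R)ᶜ ⊂ (p.primeCompl ⊔ Submonoid.powers t : Submonoid R) :=
    ⟨fun u hu => Submonoid.mem_sup_left hu,
      fun hle => hle (Submonoid.mem_sup_right (Submonoid.mem_powers t)) ht⟩
  obtain ⟨y, hy, hyp⟩ := Set.exists_of_ssubset (h _ hlt)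
  obtain ⟨s, hs, hsy⟩ := mem_sComp_bot_iff.mp hy
  obtain ⟨u, hu, _, ⟨n, rfl⟩, rfl⟩ := Submonoid.mem_sup.mp hs
  -- `u • y` is killed by `t ^ n`, and a `v ∉ p` killing it would give `v * u ∉ p` killing `y`.
  refine ⟨u • y, ⟨n, by rwa [smul_smul, mul_comm]⟩, fun v hv hvuy => hyp ?_⟩
  exact mem_sComp_bot_iff.mpr
    ⟨v * u, Ideal.mem_primeCompl_iff.mp (mul_mem hv hu), by rwa [mul_smul]⟩

end KrullAssociated

theorem statement13_general {R M ι : Type*} [CommRing R] [AddCommGroup M] [Module R M]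
    (p : ι → Ideal R) (hp : ∀ i, (p i).IsPrime)
    (hass : ∀ i, KrullAssociated R M (p i))
    (𝔭 : Ideal R)
    (hunion : (𝔭 : Set R) = ⋃ i, (p i : Set R)) :
    KrullAssociated R M 𝔭 := by
  refine krullAssociated_of_forall_mem fun t ht => ?_
  obtain ⟨i, hti⟩ := Set.mem_iUnion.mp (hunion ▸ ht : t ∈ ⋃ i, (p i : Set R))
  have := hp i
  obtain ⟨x, htx, hx⟩ := (hass i).exists_pow_smul_eq_zero hti
  have hpi : (p i : Set R) ⊆ 𝔭 := hunion ▸ Set.subset_iUnion (fun j => (p j : Set R)) i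
  exact ⟨x, htx, fun v hv => hx v (fun hvi => hv (hpi hvi))⟩

/-- if `(𝔭ᵢ)` is a family of primes Krull-associated to `M`
whose union is a prime ideal `𝔭`, then `𝔭` is Krull-associated to `M`. -/
theorem statement13 {R M ι : Type*} [CommRing R] [AddCommGroup M] [Module R M]
    (p : ι → Ideal R) (hp : ∀ i, (p i).IsPrime)
    (hass : ∀ i, KrullAssociated R M (p i))
    (𝔭 : Ideal R) (h𝔭 : 𝔭.IsPrime)
    (hunion : (𝔭 : Set R) = ⋃ i, (p i : Set R)) :
    KrullAssociated R M 𝔭 :=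
  statement13_general p hp hass 𝔭 hunion
end

section
/- Let R be a commutative ring and M an R-module. Then the union of all weakly associated primes of M, the union of all Krull-associated primes of M, and the set of zero divisors for M all coincide: ⋃_{𝔭 weakly associated to M} 𝔭 = ⋃_{𝔭 Krull-associated to M} 𝔭 = {r ∈ R : r is a zero divisor for M}. -/
section Aux

variable {R : Type*} [CommRing R]

/-- The multiplicative set of elements of the form `s * r ^ n` with `s ∉ p`. -/
def auxMonoid (p : Ideal R) (hp : p.IsPrime) (r : R) : Submonoid R where
  carrier := {a | ∃ s ∉ p, ∃ n : ℕ, s * r ^ n = a}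
  one_mem' := ⟨1, fun h => hp.ne_top ((Ideal.eq_top_iff_one _).mpr h), 0, by ring⟩
  mul_mem' := by
    rintro a b ⟨s, hs, m, rfl⟩ ⟨t, ht, n, rfl⟩
    exact ⟨s * t, fun h => ((hp.mem_or_mem h).elim hs ht), m + n, by ring⟩

theorem aux_step {p I : Ideal R} (hp : p ∈ I.minimalPrimes) {r : R} (hr : r ∈ p) :
    ∃ s ∉ p, ∃ n : ℕ, s * r ^ n ∈ I := by
  by_contra h
  push_neg at h
  haveI hprime : p.IsPrime := hp.1.1
  have hdisj : Disjoint (I : Set R) (auxMonoid p hprime r : Set R) := by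
    rw [Set.disjoint_left]
    rintro a haI ⟨s, hs, n, rfl⟩
    exact h s hs n haI
  obtain ⟨q, hq, hIq, hdq⟩ := Ideal.exists_le_prime_disjoint I (auxMonoid p hprime r) hdisj
  have hqp : q ≤ p := by
    intro x hx
    by_contra hxp
    exact Set.disjoint_left.mp hdq hx ⟨x, hxp, 0, by ring⟩
  have : p ≤ q := hp.2 ⟨hq, hIq⟩ hqp
  exact Set.disjoint_left.mp hdq (this hr)
    ⟨1, fun h => hprime.ne_top ((Ideal.eq_top_iff_one _).mpr h), 1, by ring⟩

variable {M : Type*} [AddCommGroup M] [Module R M]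

open Classical in
theorem aux_generic {p : Ideal R} (hp : p.IsPrime) {x : M} {r : R}
    (h0 : ∀ s ∉ p, s • x ≠ 0) {s : R} (hs : s ∉ p) {n : ℕ} (h : (s * r ^ n) • x = 0) :
    ∃ z : M, r • z = 0 ∧ ∀ t ∉ p, t • z ≠ 0 := by
  have H : ∃ n : ℕ, ∃ s ∉ p, (s * r ^ n) • x = 0 := ⟨n, s, hs, h⟩
  obtain ⟨s₀, hs₀, hsx⟩ := Nat.find_spec H
  set n₀ := Nat.find H with hn₀
  have hne : n₀ ≠ 0 := by
    intro h0'
    rw [h0'] at hsx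
    simp only [pow_zero, mul_one] at hsx
    exact h0 s₀ hs₀ hsx
  obtain ⟨m, hm⟩ : ∃ m, n₀ = m + 1 := ⟨n₀ - 1, (Nat.succ_pred_eq_of_pos (Nat.pos_of_ne_zero hne)).symm⟩
  refine ⟨(s₀ * r ^ m) • x, ?_, ?_⟩
  · rw [smul_smul, show r * (s₀ * r ^ m) = s₀ * r ^ (m + 1) by ring, ← hm]
    exact hsx
  · intro t ht htz
    have hmlt : m < n₀ := by omega
    refine Nat.find_min H hmlt ⟨t * s₀, fun hts => ((hp.mem_or_mem hts).elim ht hs₀), ?_⟩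
    rw [show (t * s₀) * r ^ m = t * (s₀ * r ^ m) by ring, ← smul_smul]
    exact htz

end Aux

/-- the union of the weakly associated primes of `M`, the union
of the Krull-associated primes of `M`, and the set of zero divisors for `M`
all coincide. -/
theorem statement14 {R M : Type*} [CommRing R] [AddCommGroup M] [Module R M] :
    (⋃ p ∈ {p : Ideal R | ∃ x : M, p ∈ (Ideal.torsionOf R M x).minimalPrimes},
        (p : Set R)) = {r : R | IsZeroDivisorFor R M r} ∧
      (⋃ p ∈ {p : Ideal R | p.IsPrime ∧ KrullAssociated R M p}, (p : Set R)) =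
        {r : R | IsZeroDivisorFor R M r} := by
  -- From a weakly associated prime `p ∋ r`, produce `z` killed by `r` but
  -- not by anything outside `p`.
  have key : ∀ (p : Ideal R) (x : M), p ∈ (Ideal.torsionOf R M x).minimalPrimes →
      ∀ r ∈ p, ∃ z : M, r • z = 0 ∧ ∀ t ∉ p, t • z ≠ 0 := by
    intro p x hp r hr
    haveI hprime : p.IsPrime := hp.1.1
    have h0 : ∀ s ∉ p, s • x ≠ 0 := fun s hs hsx =>
      hs (hp.1.2 ((Ideal.mem_torsionOf_iff x s).mpr hsx))
    obtain ⟨s, hs, n, hn⟩ := aux_step hp hr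
    exact aux_generic hprime h0 hs ((Ideal.mem_torsionOf_iff x _).mp hn)
  have one_notmem : ∀ (p : Ideal R), p.IsPrime → (1 : R) ∉ p := fun p hp h =>
    hp.ne_top ((Ideal.eq_top_iff_one _).mpr h)
  have h1 : (⋃ p ∈ {p : Ideal R | ∃ x : M, p ∈ (Ideal.torsionOf R M x).minimalPrimes},
      (p : Set R)) = {r : R | IsZeroDivisorFor R M r} := by
    ext r
    simp only [Set.mem_iUnion, Set.mem_setOf_eq, SetLike.mem_coe, exists_prop]
    constructor
    · rintro ⟨p, ⟨x, hp⟩, hr⟩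
      obtain ⟨z, hrz, hz⟩ := key p x hp r hr
      have hz1 : z ≠ 0 := fun h => hz 1 (one_notmem p hp.1.1) (by simp [h])
      exact ⟨z, hz1, hrz⟩
    · rintro ⟨y, hy, hry⟩
      have hrt : r ∈ Ideal.torsionOf R M y := (Ideal.mem_torsionOf_iff y r).mpr hry
      have hne : Ideal.torsionOf R M y ≠ ⊤ := fun h => hy (by
        have : (1 : R) ∈ Ideal.torsionOf R M y := h ▸ Submodule.mem_top
        simpa using (Ideal.mem_torsionOf_iff y 1).mp this)
      obtain ⟨mx, hmx, hle⟩ := Ideal.exists_le_maximal _ hne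
      haveI := hmx.isPrime
      obtain ⟨p, hp, _⟩ := Ideal.exists_minimalPrimes_le hle
      exact ⟨p, ⟨y, hp⟩, hp.1.2 hrt⟩
  refine ⟨h1, ?_⟩
  ext r
  simp only [Set.mem_iUnion, Set.mem_setOf_eq, SetLike.mem_coe, exists_prop]
  constructor
  · -- Krull-associated primes consist of zero divisors
    rintro ⟨p, ⟨hprime, hK⟩, hr⟩
    set T := auxMonoid p hprime r with hT
    have hsub : ((p : Set R)ᶜ ⊂ (T : Set R)) := by
      rw [Set.ssubset_def]
      refine ⟨fun s hs => ⟨s, hs, 0, by ring⟩, fun h => ?_⟩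
      have : r ∈ (p : Set R)ᶜ := h ⟨1, one_notmem p hprime, 1, by ring⟩
      exact this hr
    obtain ⟨z, hzT, hzp⟩ := Set.exists_of_ssubset (hK T hsub)
    obtain ⟨a, ⟨s, hs, n, rfl⟩, haz⟩ := hzT
    rw [Submodule.mem_bot] at haz
    have h0 : ∀ t ∉ p, t • z ≠ 0 := by
      intro t ht htz
      exact hzp ⟨t, ht, by simpa using htz⟩
    obtain ⟨y, hry, hy⟩ := aux_generic hprime h0 hs haz
    exact ⟨y, fun h => hy 1 (one_notmem p hprime) (by simp [h]), hry⟩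
  · -- every zero divisor lies in a Krull-associated prime
    intro hrz
    have hrz' : r ∈ ({r : R | IsZeroDivisorFor R M r} : Set R) := hrz
    rw [← h1] at hrz'
    replace hrz := hrz'
    simp only [Set.mem_iUnion, Set.mem_setOf_eq, SetLike.mem_coe, exists_prop] at hrz
    obtain ⟨p, ⟨x, hp⟩, hr⟩ := hrz
    haveI hprime : p.IsPrime := hp.1.1
    refine ⟨p, ⟨hprime, ?_⟩, hr⟩
    intro T hTsub
    rw [Set.ssubset_def]
    constructor
    · rintro w ⟨s, hs, hsw⟩
      exact ⟨s, hTsub.1 hs, hsw⟩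
    · intro hrev
      obtain ⟨t, htT, htp⟩ := Set.exists_of_ssubset hTsub
      have htp' : t ∈ p := by simpa using htp
      obtain ⟨z, htz, hz⟩ := key p x hp t htp'
      have hzT : z ∈ sComp R M (T : Set R) ⊥ := ⟨t, htT, by simpa using htz⟩
      obtain ⟨s, hs, hsz⟩ := hrev hzT
      rw [Submodule.mem_bot] at hsz
      exact hz s hs hsz
end

section
/- Let R be a commutative ring, M an R-module, and 𝔭 a prime ideal of R. If there exists a 𝔭-coprimary submodule U of M, then 𝔭 is weakly associated to M, i.e. there exists x ∈ M such that 𝔭 is minimal among the prime ideals containing Ann_R(x). -/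
/-- if `M` has a `𝔭`-coprimary submodule `U`, then `𝔭` is
weakly associated to `M`: there is `x ∈ M` such that `𝔭` is minimal among
the primes containing `Ann_R(x)`. -/
theorem statement15 {R M : Type*} [CommRing R] [AddCommGroup M] [Module R M]
    (𝔭 : Ideal R) [𝔭.IsPrime] (U : Submodule R M)
    (hU : IsCoprimaryFor R U 𝔭) :
    ∃ x : M, 𝔭 ∈ (Ideal.torsionOf R M x).minimalPrimes := by
  obtain ⟨⟨y, hy⟩, hzd, hnil⟩ := hU
  refine ⟨(y : M), ?_⟩
  have hann : Ideal.torsionOf R M (y : M) ≤ 𝔭 := by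
    intro r hr
    rw [Ideal.mem_torsionOf_iff] at hr
    refine hzd r ⟨y, hy, ?_⟩
    apply Subtype.ext
    simpa using hr
  have hrad : 𝔭 ≤ (Ideal.torsionOf R M (y : M)).radical := by
    intro a ha
    obtain ⟨n, hn⟩ := hnil a ha y
    exact ⟨n, by rw [Ideal.mem_torsionOf_iff]; exact_mod_cast congrArg (Subtype.val) hn⟩
  refine ⟨⟨‹𝔭.IsPrime›, hann⟩, ?_⟩
  rintro q ⟨hq, hqle⟩ hle
  have : 𝔭 ≤ q := le_trans hrad (by
    intro a ⟨n, hn⟩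
    exact hq.mem_of_pow_mem n (hqle hn))
  exact this
end

section
/- Let R be a commutative ring, M an R-module, and 𝔭 a prime ideal of R. The following are equivalent: (1) 𝔭 belongs to the support of M, i.e. the localization M_𝔭 is nonzero; (2) 𝔭 contains a prime ideal that is Krull-associated to M; (3) there exists a submodule N of M such that 𝔭 is weakly associated to M/N. Moreover each of these implies 𝔭 ⊇ Ann_R(M), and if M is finitely generated then 𝔭 ⊇ Ann_R(M) is also equivalent to (1). -/
/-- If `q` is a minimal prime over `I` and `a ∈ q`, then `s * a ^ n ∈ I`
for some `s ∉ q` and some `n`. -/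
lemma aux_min_pow {R : Type*} [CommRing R] {I q : Ideal R} (hq : q ∈ I.minimalPrimes)
    {a : R} (ha : a ∈ q) : ∃ (n : ℕ) (s : R), s ∉ q ∧ s * a ^ n ∈ I := by
  haveI hqp : q.IsPrime := hq.1.1
  by_contra h
  push_neg at h
  set S : Submonoid R :=
    { carrier := {x | ∃ s ∉ q, ∃ n : ℕ, x = s * a ^ n}
      one_mem' := ⟨1, hqp.1 ∘ (Ideal.eq_top_iff_one q).mpr, 0, by ring⟩
      mul_mem' := by
        rintro x y ⟨s, hs, m, rfl⟩ ⟨t, ht, n, rfl⟩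
        exact ⟨s * t, fun hst => ((hqp.mem_or_mem hst).elim hs ht), m + n, by ring⟩ } with hS
  have hdisj : Disjoint (I : Set R) (S : Set R) := by
    rw [Set.disjoint_left]
    rintro x hxI ⟨s, hs, n, rfl⟩
    exact (h n s hs) hxI
  obtain ⟨p, hp, hIp, hpS⟩ := Ideal.exists_le_prime_disjoint I S hdisj
  have hpq : p ≤ q := by
    intro b hb
    by_contra hbq
    exact Set.disjoint_left.mp hpS hb ⟨b, hbq, 0, by ring⟩
  have hqp' : q ≤ p := hq.2 ⟨hp, hIp⟩ hpq
  exact Set.disjoint_left.mp hpS (hqp' ha) ⟨1, hqp.1 ∘ (Ideal.eq_top_iff_one q).mpr, 1, by ring⟩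

/-- for a prime `𝔭` the conditions (1) `M_𝔭 ≠ 0`,
(2) `𝔭` contains a Krull-associated prime of `M`, (3) `𝔭` is weakly
associated to some quotient `M/N`, are equivalent; they imply
`𝔭 ⊇ Ann_R(M)`, and for finitely generated `M` the latter is also
equivalent to (1). -/
theorem statement18 {R M : Type*} [CommRing R] [AddCommGroup M] [Module R M]
    (𝔭 : Ideal R) [𝔭.IsPrime] :
    ((∃ y : LocalizedModule 𝔭.primeCompl M, y ≠ 0) ↔
        ∃ q : Ideal R, q.IsPrime ∧ KrullAssociated R M q ∧ q ≤ 𝔭) ∧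
      ((∃ y : LocalizedModule 𝔭.primeCompl M, y ≠ 0) ↔
        ∃ (N : Submodule R M) (z : M ⧸ N),
          𝔭 ∈ (Ideal.torsionOf R (M ⧸ N) z).minimalPrimes) ∧
      ((∃ y : LocalizedModule 𝔭.primeCompl M, y ≠ 0) →
        (⊤ : Submodule R M).annihilator ≤ 𝔭) ∧
      (Module.Finite R M →
        ((⊤ : Submodule R M).annihilator ≤ 𝔭 →
          ∃ y : LocalizedModule 𝔭.primeCompl M, y ≠ 0)) := by
  have key : (∃ y : LocalizedModule 𝔭.primeCompl M, y ≠ 0) ↔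
      ∃ m : M, ∀ r ∉ 𝔭, r • m ≠ 0 := by
    have h := Module.mem_support_iff' (R := R) (M := M) (p := ⟨𝔭, inferInstance⟩)
    rw [Module.mem_support_iff] at h
    constructor
    · rintro ⟨y, hy⟩
      exact h.mp ⟨y, 0, hy⟩
    · intro hx
      obtain ⟨y, z, hyz⟩ := (h.mpr hx).exists_pair_ne
      exact ⟨y - z, sub_ne_zero.mpr hyz⟩
  refine ⟨?_, ?_, ?_, ?_⟩
  · -- (1) ↔ (2) Krull-associated primes
    constructor
    · intro h
      obtain ⟨x, hx⟩ := key.mp h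
      have hI : Ideal.torsionOf R M x ≤ 𝔭 := by
        intro a ha
        by_contra hap
        exact hx a hap ((Ideal.mem_torsionOf_iff x a).mp ha)
      obtain ⟨q, hq, hq𝔭⟩ := Ideal.exists_minimalPrimes_le hI
      haveI hqp : q.IsPrime := hq.1.1
      refine ⟨q, hqp, ?_, hq𝔭⟩
      intro T hT
      have hsub : sComp R M ((q : Set R)ᶜ) ⊥ ⊆ sComp R M (T : Set R) ⊥ := by
        rintro y ⟨s, hs, hsy⟩
        exact ⟨s, hT.subset hs, hsy⟩
      rw [Set.ssubset_iff_of_subset hsub]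
      obtain ⟨a, haT, haq⟩ := Set.exists_of_ssubset hT
      have haq' : a ∈ q := not_not.mp haq
      obtain ⟨n, s, hs, hsI⟩ := aux_min_pow hq haq'
      refine ⟨x, ⟨s * a ^ n, T.mul_mem (hT.subset hs) (pow_mem haT n), ?_⟩, ?_⟩
      · rw [Submodule.mem_bot]
        exact (Ideal.mem_torsionOf_iff x _).mp hsI
      · rintro ⟨t, ht, htx⟩
        rw [Submodule.mem_bot] at htx
        exact ht (hq.1.2 ((Ideal.mem_torsionOf_iff x t).mpr htx))
    · rintro ⟨q, hqp, hK, hle⟩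
      haveI := hqp
      have h0 : ((q : Set R)ᶜ ⊂ ((⊤ : Submonoid R) : Set R)) := by
        rw [Submonoid.coe_top, Set.ssubset_univ_iff]
        intro hc
        have h0' : (0 : R) ∈ ((q : Set R)ᶜ) := hc ▸ Set.mem_univ 0
        exact h0' q.zero_mem
      obtain ⟨x, _, hxq⟩ := Set.exists_of_ssubset (hK ⊤ h0)
      refine key.mpr ⟨x, fun r hr hrx => hxq ⟨r, ?_, by rwa [Submodule.mem_bot]⟩⟩
      exact fun hrq => hr (hle hrq)
  · -- (1) ↔ (3) weakly associated primes
    constructor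
    · intro h
      obtain ⟨x, hx⟩ := key.mp h
      refine ⟨𝔭 • Submodule.span R {x}, Submodule.Quotient.mk x, ?_⟩
      have htor : Ideal.torsionOf R (M ⧸ 𝔭 • Submodule.span R {x})
          (Submodule.Quotient.mk x) = 𝔭 := by
        ext a
        rw [Ideal.mem_torsionOf_iff, ← Submodule.Quotient.mk_smul,
          Submodule.Quotient.mk_eq_zero, Submodule.mem_smul_span_singleton]
        constructor
        · rintro ⟨b, hb, hbx⟩
          by_contra hap
          have hab : (a - b) • x = 0 := by rw [sub_smul, hbx, sub_self]
          refine hx (a - b) (fun hmem => hap ?_) hab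
          simpa using add_mem hmem hb
        · intro ha
          exact ⟨a, ha, rfl⟩
      rw [htor]
      exact ⟨⟨inferInstance, le_refl 𝔭⟩, fun q hq _ => hq.2⟩
    · rintro ⟨N, z, hz⟩
      obtain ⟨m, rfl⟩ := Submodule.Quotient.mk_surjective N z
      refine key.mpr ⟨m, fun r hr hrm => hr ?_⟩
      refine hz.1.2 ((Ideal.mem_torsionOf_iff _ r).mpr ?_)
      rw [← Submodule.Quotient.mk_smul, hrm, Submodule.Quotient.mk_zero]
  · -- (1) → annihilator ≤ 𝔭
    intro h a ha
    obtain ⟨m, hm⟩ := key.mp h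
    by_contra hap
    exact hm a hap (Submodule.mem_annihilator.mp ha m Submodule.mem_top)
  · -- finite case
    intro _ hann
    have h1 : ((Module.annihilator R M : Ideal R) : Set R) ⊆ 𝔭 := by
      rw [← Submodule.annihilator_top]
      exact hann
    have h2 : (⟨𝔭, inferInstance⟩ : PrimeSpectrum R) ∈ Module.support R M := by
      rw [Module.support_eq_zeroLocus]
      exact h1
    exact key.mpr (Module.mem_support_iff'.mp h2)
end
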